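/- arXiv:2010.10264 — 7 statements merged into one kernel-verified Lean document; each statement's English description precedes it below -/
import Mathlib

section
/- If F is a commutative fusion ring with simultaneous diagonalization data λ_{i,j} (algebraic integers), formal codegrees c_j = Σ_i |λ_{i,j}|², c_1 = FPdim(F), and the Schur orthogonality relation Σ_j (1/c_j) λ_{i,j} conj(λ_{i',j}) = δ_{i,i'} · c_1/λ_{i,1} holds, then the statement 'λ_{i,j} c_1 / (λ_{i,1} c_j) is an algebraic integer for all i,j' implies that c_1/λ_{i,1} is an algebraic integer for all i (Frobenius type). -/
/-- Isaacs-type criterion implies Frobenius type for commutative fusion rings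
(abstracted via the diagonalization data). -/
theorem frobenius_type_of_isaacs
    (n : ℕ) (lam : Fin n → Fin n → ℂ) (c : Fin n → ℂ) (j₀ : Fin n)
    (h_int : ∀ i j, IsIntegral ℤ (lam i j))
    (h_c : ∀ j, c j = ∑ i, lam i j * (starRingEnd ℂ) (lam i j))
    (h_cne : ∀ j, c j ≠ 0)
    (h_lne : ∀ i, lam i j₀ ≠ 0)
    (h_schur : ∀ i i', ∑ j, (c j)⁻¹ * lam i j * (starRingEnd ℂ) (lam i' j)
        = if i = i' then c j₀ / lam i j₀ else 0)
    (h_ratio : ∀ i j, IsIntegral ℤ (lam i j * c j₀ / (lam i j₀ * c j))) :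
    ∀ i, IsIntegral ℤ (c j₀ / lam i j₀) := by
  intro i
  set x : ℂ := c j₀ / lam i j₀ with hx
  have hs := h_schur i i
  simp only [if_pos rfl, if_true] at hs
  have hsq : x ^ 2 = ∑ j, (lam i j * c j₀ / (lam i j₀ * c j)) * (starRingEnd ℂ) (lam i j) := by
    have : ∑ j, (lam i j * c j₀ / (lam i j₀ * c j)) * (starRingEnd ℂ) (lam i j)
        = x * ∑ j, (c j)⁻¹ * lam i j * (starRingEnd ℂ) (lam i j) := by
      rw [Finset.mul_sum]
      refine Finset.sum_congr rfl fun j _ => ?_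
      field_simp [hx]
      ring
    rw [this, hs, ← hx, sq]
  have hint2 : IsIntegral ℤ (x ^ 2) := by
    rw [hsq]
    refine IsIntegral.sum _ fun j _ => IsIntegral.mul (h_ratio i j) ?_
    exact (h_int i j).map (starRingEnd ℂ).toIntAlgHom
  exact hint2.of_pow two_pos
end

section
/- For the near-group fusion ring C_3 + 1 (rank 4, with basis 1, g, g², x where g has order 3, g·x = x·g = x, and x² = 1 + g + g² + x), the formal codegrees are (13+√13)/2, (13-√13)/2, 3, 3, and the ratio ((13+√13)/2)/3 = (13+√13)/6 is not an algebraic integer; hence by the Drinfeld-center criterion this fusion ring admits no complex categorification. -/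
/-!
The matrix `A = Σᵢ XᵢXᵢᵀ` of `C₃ + 1` is `3I + J + 3E₄₄`. It acts by `3` on the vectors
orthogonal to `u = (1,1,1,0)` and `e₄`, and on their span by `u ↦ 6u + 3e₄`, `e₄ ↦ u + 7e₄`,
which has trace `13` and determinant `39`. The codegree ratio `(13+√13)/6` is a root of
`x² - (13/3)x + 13/3`, its minimal polynomial over `ℚ` since `√13` is irrational. Over the
integrally closed ring `ℤ` the minimal polynomial of an integral element has integer
coefficients, and `13/3` is not an integer.
-/

open Polynomial Matrix

theorem minpoly_eq_of_natDegree_eq_two {K L : Type*} [Field K] [Ring L] [Nontrivial L]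
    [Algebra K L] {x : L} (hx : x ∉ (algebraMap K L).range) {p : K[X]} (hp : p.Monic)
    (hp2 : p.natDegree = 2) (hpx : aeval x p = 0) : minpoly K x = p := by
  have hint : IsIntegral K x := ⟨p, hp, hpx⟩
  refine (eq_of_monic_of_dvd_of_natDegree_le (minpoly.monic hint) hp (minpoly.dvd K x hpx) ?_).symm
  rw [hp2]
  exact (minpoly.two_le_natDegree_iff hint).2 hx

theorem minpoly_rat_coeff_mem_range_intCast {S : Type*} [CommRing S] [IsDomain S] [Algebra ℚ S]
    {x : S} (hx : IsIntegral ℤ x) (n : ℕ) :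
    (minpoly ℚ x).coeff n ∈ Set.range (Int.cast : ℤ → ℚ) := by
  have hmap := minpoly.isIntegrallyClosed_eq_field_fractions' ℚ hx
  exact ⟨(minpoly ℤ x).coeff n, by rw [hmap]; simp⟩

theorem irrational_thirteen_add_sqrt_div_six : Irrational ((13 + √13) / 6) := by
  have hsqrt : Irrational √13 := by simpa using (by norm_num : Nat.Prime 13).irrational_sqrt
  simpa using (hsqrt.natCast_add 13).div_natCast (m := 6) (by norm_num)

theorem minpoly_thirteen_add_sqrt_div_six :
    minpoly ℚ ((13 + √13) / 6 : ℝ) = X ^ 2 - C (13 / 3) * X + C (13 / 3) := by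
  refine minpoly_eq_of_natDegree_eq_two irrational_thirteen_add_sqrt_div_six ?_ ?_ ?_
  · monicity!
  · compute_degree!
  · have hsq : √13 ^ 2 = 13 := Real.sq_sqrt (by norm_num)
    simp only [map_add, map_sub, map_pow, map_mul, aeval_X, aeval_C, eq_ratCast]
    push_cast
    linear_combination hsq / 36

theorem not_isIntegral_int_thirteen_add_sqrt_div_six :
    ¬ IsIntegral ℤ ((13 + √13) / 6 : ℝ) := by
  intro h
  obtain ⟨n, hn⟩ := minpoly_rat_coeff_mem_range_intCast h 0
  rw [minpoly_thirteen_add_sqrt_div_six] at hn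
  simp only [coeff_add, coeff_sub, coeff_C_zero, coeff_X_pow, coeff_C_mul, coeff_X_zero] at hn
  have h3n : (3 : ℚ) * n = 13 := by rw [hn]; norm_num
  have h3n_int : 3 * n = 13 := by exact_mod_cast h3n
  omega

theorem charpoly_codegreeMatrix_C3_plus_1 :
    (!![4,1,1,1; 1,4,1,1; 1,1,4,1; 1,1,1,7] : Matrix (Fin 4) (Fin 4) ℝ).charpoly =
      (X ^ 2 - 13 * X + 39) * (X - 3) ^ 2 := by
  simp [Matrix.charpoly, Matrix.det_succ_row_zero, Fin.sum_univ_succ, charmatrix_apply,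
    Fin.succAbove, map_ofNat]
  ring

/-- For the near-group fusion ring C₃ + 1 (basis 1, g, g², x), the formal codegrees
(eigenvalues of A = Σᵢ Xᵢ Xᵢᵀ) are (13±√13)/2 and 3 (multiplicity 2), i.e. the
characteristic polynomial of A is (x² - 13x + 39)(x - 3)², and the ratio
((13+√13)/2)/3 = (13+√13)/6 is not an algebraic integer (Drinfeld center criterion
obstruction to complex categorification). -/
theorem nearGroup_C3_plus_1_not_categorifiable :
    let X₁ : Matrix (Fin 4) (Fin 4) ℝ := 1
    let Xg : Matrix (Fin 4) (Fin 4) ℝ :=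
      !![0,0,1,0; 1,0,0,0; 0,1,0,0; 0,0,0,1]
    let Xg2 : Matrix (Fin 4) (Fin 4) ℝ :=
      !![0,1,0,0; 0,0,1,0; 1,0,0,0; 0,0,0,1]
    let Xx : Matrix (Fin 4) (Fin 4) ℝ :=
      !![0,0,0,1; 0,0,0,1; 0,0,0,1; 1,1,1,1]
    let A := X₁ * X₁ᵀ + Xg * Xgᵀ + Xg2 * Xg2ᵀ + Xx * Xxᵀ
    A.charpoly = (X ^ 2 - 13 * X + 39) * (X - 3) ^ 2 ∧
      ((13 + Real.sqrt 13) / 2) / 3 = (13 + Real.sqrt 13) / 6 ∧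
      ¬ IsIntegral ℤ ((13 + Real.sqrt 13) / 6) := by
  intro X₁ Xg Xg2 Xx A
  have hA : A = !![4,1,1,1; 1,4,1,1; 1,1,4,1; 1,1,1,7] := by
    ext i j
    fin_cases i <;> fin_cases j <;>
      simp [A, X₁, Xg, Xg2, Xx, vecMul, dotProduct, Fin.sum_univ_four] <;> norm_num
  exact ⟨hA ▸ charpoly_codegreeMatrix_C3_plus_1, by ring,
    not_isIntegral_int_thirteen_add_sqrt_div_six⟩
end

section
/- For the near-group fusion ring C_4 + 1 (rank 5, basis 1, g, g², g³, x with g of order 4, g·x = x, x² = 1 + g + g² + g³ + x), the formal codegrees are (17+√17)/2, (17-√17)/2, and 4 with multiplicity 3, and ((17+√17)/2)/4 = (17+√17)/8 is not an algebraic integer. -/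
/-!
The fusion matrices of the group elements are permutation matrices, so they contribute `4 • 1`
to `A`, while `Xx * Xxᵀ = U * Uᵀ` has rank two, with `U = !![1,0; 1,0; 1,0; 1,0; 1,2]`.
Since `U * V` and `V * U` have the same characteristic polynomial up to a power of `X`,
`A.charpoly` is `(X - 4) ^ 3` times the characteristic polynomial of the `2 × 2` matrix
`Uᵀ * U = !![5,2; 2,4]`, shifted by `4`.

The number `(17 + √17) / 8` is irrational and a root of `X ^ 2 - (17/4) X + 17/4`, which is
therefore its minimal polynomial over `ℚ`. Over the integrally closed ring `ℤ`, the rational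
minimal polynomial of an integral element has integer coefficients, and `17/4` is no integer.
-/

open Polynomial Matrix

namespace Matrix

variable {R : Type*} [CommRing R] {m n : Type*} [Fintype m] [DecidableEq m] [Fintype n]
  [DecidableEq n]

theorem charpoly_scalar_add_mul_of_le (c : R) (U : Matrix m n R) (V : Matrix n m R)
    (hle : Fintype.card n ≤ Fintype.card m) :
    (scalar m c + U * V).charpoly =
      (X - C c) ^ (Fintype.card m - Fintype.card n) * (V * U).charpoly.comp (X - C c) := by
  rw [add_comm, ← sub_neg_eq_add, ← map_neg, charpoly_sub_scalar, charpoly_mul_comm_of_le U V hle,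
    map_neg, ← sub_eq_add_neg, mul_comp, X_pow_comp]

end Matrix

theorem minpoly.eq_of_natDegree_eq_two {K L : Type*} [Field K] [Field L] [Algebra K L] {α : L}
    {p : K[X]} (hp : p.Monic) (hdeg : p.natDegree = 2) (hroot : Polynomial.aeval α p = 0)
    (hirr : α ∉ (algebraMap K L).range) : minpoly K α = p :=
  (eq_of_monic_of_dvd_of_natDegree_le (minpoly.monic ⟨p, hp, hroot⟩) hp (minpoly.dvd K α hroot)
    (hdeg ▸ (minpoly.two_le_natDegree_iff ⟨p, hp, hroot⟩).2 hirr)).symm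

theorem coeff_mem_range_intCast_of_isIntegral {L : Type*} [Field L] [CharZero L] {α : L}
    {p : ℚ[X]} (hp : p.Monic) (hdeg : p.natDegree = 2) (hroot : aeval α p = 0)
    (hirr : α ∉ (algebraMap ℚ L).range) (hint : IsIntegral ℤ α) (i : ℕ) :
    p.coeff i ∈ Set.range ((↑) : ℤ → ℚ) := by
  rw [← minpoly.eq_of_natDegree_eq_two hp hdeg hroot hirr,
    minpoly.isIntegrallyClosed_eq_field_fractions' ℚ hint, coeff_map]
  exact ⟨_, rfl⟩

theorem not_isIntegral_seventeen_add_sqrt_div_eight :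
    ¬ IsIntegral ℤ ((17 + Real.sqrt 17) / 8) := by
  set α : ℝ := (17 + Real.sqrt 17) / 8
  set p : ℚ[X] := X ^ 2 - C (17 / 4) * X + C (17 / 4)
  have hirr : Irrational α := by
    have := (Nat.Prime.irrational_sqrt (p := 17) (by norm_num)).natCast_add 17
    simpa [α] using this.div_natCast (m := 8) (by norm_num)
  have hroot : aeval α p = 0 := by
    have hsq : Real.sqrt 17 ^ 2 = 17 := Real.sq_sqrt (by norm_num)
    simp only [p, α, map_add, map_sub, map_mul, map_pow, aeval_X, aeval_C]
    norm_num
    linear_combination hsq / 64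
  intro hint
  obtain ⟨n, hn⟩ := coeff_mem_range_intCast_of_isIntegral (by simp only [p]; monicity!)
    (by simp only [p]; compute_degree!) hroot (by simpa [Irrational] using hirr) hint 1
  have h4n : (4 * n : ℚ) = -17 := by
    simp [p, coeff_C] at hn
    rw [hn]
    norm_num
  have : 4 * n = -17 := by exact_mod_cast h4n
  omega

/-- For the near-group fusion ring C₄ + 1 (basis 1, g, g², g³, x), the formal
codegrees are (17±√17)/2 and 4 with multiplicity 3 (i.e. the characteristic
polynomial of A = Σᵢ Xᵢ Xᵢᵀ is (x² - 17x + 68)(x - 4)³), and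
((17+√17)/2)/4 = (17+√17)/8 is not an algebraic integer. -/
theorem nearGroup_C4_plus_1_codegrees :
    let X₁ : Matrix (Fin 5) (Fin 5) ℝ := 1
    let Xg : Matrix (Fin 5) (Fin 5) ℝ :=
      !![0,0,0,1,0; 1,0,0,0,0; 0,1,0,0,0; 0,0,1,0,0; 0,0,0,0,1]
    let Xg2 : Matrix (Fin 5) (Fin 5) ℝ :=
      !![0,0,1,0,0; 0,0,0,1,0; 1,0,0,0,0; 0,1,0,0,0; 0,0,0,0,1]
    let Xg3 : Matrix (Fin 5) (Fin 5) ℝ :=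
      !![0,1,0,0,0; 0,0,1,0,0; 0,0,0,1,0; 1,0,0,0,0; 0,0,0,0,1]
    let Xx : Matrix (Fin 5) (Fin 5) ℝ :=
      !![0,0,0,0,1; 0,0,0,0,1; 0,0,0,0,1; 0,0,0,0,1; 1,1,1,1,1]
    let A := X₁ * X₁ᵀ + Xg * Xgᵀ + Xg2 * Xg2ᵀ + Xg3 * Xg3ᵀ + Xx * Xxᵀ
    A.charpoly = (X ^ 2 - 17 * X + 68) * (X - 4) ^ 3 ∧
      ((17 + Real.sqrt 17) / 2) / 4 = (17 + Real.sqrt 17) / 8 ∧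
      ¬ IsIntegral ℤ ((17 + Real.sqrt 17) / 8) := by
  intro X₁ Xg Xg2 Xg3 Xx A
  refine ⟨?_, by ring, not_isIntegral_seventeen_add_sqrt_div_eight⟩
  let U : Matrix (Fin 5) (Fin 2) ℝ := !![1,0; 1,0; 1,0; 1,0; 1,2]
  have hA : A = scalar (Fin 5) 4 + U * Uᵀ := by
    ext i j
    fin_cases i <;> fin_cases j <;>
      simp [A, X₁, Xg, Xg2, Xg3, Xx, U, vecMul, dotProduct, Fin.sum_univ_five, one_apply] <;>
      norm_num
  have hUU : Uᵀ * U = !![5,2; 2,4] := by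
    ext i j
    fin_cases i <;> fin_cases j <;> simp [U, mul_apply, Fin.sum_univ_five] <;> norm_num
  rw [hA, charpoly_scalar_add_mul_of_le _ _ _ (by simp), hUU, charpoly_fin_two]
  norm_num [trace_fin_two, det_fin_two, C_ofNat]
  ring
end

section
/- The number (21+√21)/10 is not an algebraic integer; consequently, the near-group fusion ring C_5 + 1, whose formal codegrees are (21+√21)/2, (21-√21)/2 and 5 (with multiplicity 4), fails the Drinfeld center criterion. -/
/-!
The number α = (21 + √21)/10 is irrational and a root of X² - (21/5)X + 21/5, so this monic
quadratic is its minimal polynomial over ℚ. Since ℤ is integrally closed, the minimal polynomial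
over ℚ of an algebraic integer is the image of its minimal polynomial over ℤ, so it would have
integer coefficients.

For the codegrees, the five permutation matrices contribute 5 to A, and Xx Xxᵀ = 𝟙𝟙ᵀ + 5 e₆e₆ᵀ
factors as W Vᵀ through ℝ². Sylvester's identity χ(W Vᵀ) = X⁴ χ(Vᵀ W) with
Vᵀ W = [[6, 5], [1, 5]] gives χ(A) = (X - 5)⁴ ((X - 5)² - 11(X - 5) + 25).
-/

open Polynomial Matrix

theorem minpoly.eq_of_natDegree_eq_two_s5 {K B : Type*} [Field K] [Ring B] [IsDomain B]
    [Algebra K B] {x : B} {q : K[X]} (hq : q.Monic) (hdeg : q.natDegree = 2)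
    (hx : Polynomial.aeval x q = 0) (hirr : x ∉ (algebraMap K B).range) : minpoly K x = q := by
  have hint : IsIntegral K x := ⟨q, hq, hx⟩
  refine (eq_of_monic_of_dvd_of_natDegree_le (minpoly.monic hint) hq
    (minpoly.dvd K x hx) ?_).symm
  rw [hdeg]
  exact (minpoly.two_le_natDegree_iff hint).2 hirr

theorem minpoly.coeff_mem_range_of_isIntegral {R K S : Type*} [CommRing R] [IsDomain R]
    [IsIntegrallyClosed R] [Field K] [Algebra R K] [IsFractionRing R K] [CommRing S] [IsDomain S]
    [Algebra R S] [Algebra K S] [IsScalarTower R K S] {x : S} (hx : IsIntegral R x) (n : ℕ) :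
    (minpoly K x).coeff n ∈ (algebraMap R K).range := by
  rw [minpoly.isIntegrallyClosed_eq_field_fractions' K hx, coeff_map]
  exact ⟨_, rfl⟩

theorem irrational_twentyOne_add_sqrt_div_ten : Irrational ((21 + √21) / 10) := by
  have h : Irrational √(21 : ℕ) := irrational_sqrt_natCast_iff.2 (by decide +kernel)
  simpa using (h.natCast_add 21).div_natCast (m := 10) (by norm_num)

theorem minpoly_twentyOne_add_sqrt_div_ten :
    minpoly ℚ ((21 + √21) / 10 : ℝ) = X ^ 2 - C (21 / 5) * X + C (21 / 5) := by
  refine minpoly.eq_of_natDegree_eq_two_s5 (by monicity!) (by compute_degree!) ?_ ?_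
  · have hs : √21 ^ 2 = (21 : ℝ) := Real.sq_sqrt (by norm_num)
    simp only [map_add, map_sub, map_mul, map_pow, aeval_X, aeval_C, eq_ratCast]
    push_cast
    linear_combination hs / 100
  · rintro ⟨r, hr⟩
    exact irrational_twentyOne_add_sqrt_div_ten ⟨r, (eq_ratCast _ r).symm.trans hr⟩

theorem not_isIntegral_twentyOne_add_sqrt_div_ten :
    ¬ IsIntegral ℤ ((21 + √21) / 10 : ℝ) := by
  intro hint
  obtain ⟨z, hz⟩ := minpoly.coeff_mem_range_of_isIntegral (K := ℚ) hint 1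
  rw [minpoly_twentyOne_add_sqrt_div_ten] at hz
  have h5z : (5 * z : ℚ) = -21 := by
    simp only [eq_intCast] at hz
    rw [hz]
    norm_num [coeff_C]
  have : 5 * z = -21 := by exact_mod_cast h5z
  omega

theorem Matrix.charpoly_add_scalar {n R : Type*} [Fintype n] [DecidableEq n] [CommRing R]
    (M : Matrix n n R) (μ : R) :
    (M + scalar n μ).charpoly = M.charpoly.comp (X - C μ) := by
  simpa [sub_eq_add_neg] using M.charpoly_sub_scalar (-μ)

/-- (21+√21)/10 is not an algebraic integer; consequently the near-group fusion
ring C₅ + 1, whose formal codegrees are (21±√21)/2 and 5 (multiplicity 4) — i.e.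
the characteristic polynomial of A = Σᵢ Xᵢ Xᵢᵀ is (x² - 21x + 105)(x - 5)⁴ —
fails the Drinfeld center criterion, since ((21+√21)/2)/5 = (21+√21)/10. -/
theorem nearGroup_C5_plus_1_fails_drinfeld :
    let X₁ : Matrix (Fin 6) (Fin 6) ℝ := 1
    let Xg : Matrix (Fin 6) (Fin 6) ℝ :=
      !![0,0,0,0,1,0; 1,0,0,0,0,0; 0,1,0,0,0,0; 0,0,1,0,0,0; 0,0,0,1,0,0;
         0,0,0,0,0,1]
    let Xg2 : Matrix (Fin 6) (Fin 6) ℝ :=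
      !![0,0,0,1,0,0; 0,0,0,0,1,0; 1,0,0,0,0,0; 0,1,0,0,0,0; 0,0,1,0,0,0;
         0,0,0,0,0,1]
    let Xg3 : Matrix (Fin 6) (Fin 6) ℝ :=
      !![0,0,1,0,0,0; 0,0,0,1,0,0; 0,0,0,0,1,0; 1,0,0,0,0,0; 0,1,0,0,0,0;
         0,0,0,0,0,1]
    let Xg4 : Matrix (Fin 6) (Fin 6) ℝ :=
      !![0,1,0,0,0,0; 0,0,1,0,0,0; 0,0,0,1,0,0; 0,0,0,0,1,0; 1,0,0,0,0,0;
         0,0,0,0,0,1]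
    let Xx : Matrix (Fin 6) (Fin 6) ℝ :=
      !![0,0,0,0,0,1; 0,0,0,0,0,1; 0,0,0,0,0,1; 0,0,0,0,0,1; 0,0,0,0,0,1;
         1,1,1,1,1,1]
    let A := X₁ * X₁ᵀ + Xg * Xgᵀ + Xg2 * Xg2ᵀ + Xg3 * Xg3ᵀ + Xg4 * Xg4ᵀ
      + Xx * Xxᵀ
    ¬ IsIntegral ℤ ((21 + Real.sqrt 21) / 10) ∧
      ((21 + Real.sqrt 21) / 2) / 5 = (21 + Real.sqrt 21) / 10 ∧
      A.charpoly = (X ^ 2 - 21 * X + 105) * (X - 5) ^ 4 := by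
  intro X₁ Xg Xg2 Xg3 Xg4 Xx A
  refine ⟨not_isIntegral_twentyOne_add_sqrt_div_ten, by ring, ?_⟩
  let W : Matrix (Fin 6) (Fin 2) ℝ := !![1,0; 1,0; 1,0; 1,0; 1,0; 1,5]
  let V : Matrix (Fin 6) (Fin 2) ℝ := !![1,0; 1,0; 1,0; 1,0; 1,0; 1,1]
  obtain ⟨hg, hg2, hg3, hg4⟩ :
      Xg * Xgᵀ = 1 ∧ Xg2 * Xg2ᵀ = 1 ∧ Xg3 * Xg3ᵀ = 1 ∧ Xg4 * Xg4ᵀ = 1 := by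
    refine ⟨?_, ?_, ?_, ?_⟩ <;> ext i j <;>
      simp only [mul_apply, transpose_apply, Fin.sum_univ_succ, Fin.sum_univ_zero] <;>
      fin_cases i <;> fin_cases j <;> simp [Xg, Xg2, Xg3, Xg4]
  have hx : Xx * Xxᵀ = W * Vᵀ := by
    ext i j
    simp only [mul_apply, transpose_apply, Fin.sum_univ_succ, Fin.sum_univ_zero]
    fin_cases i <;> fin_cases j <;> simp [Xx, W, V]
    norm_num
  have hA : A = W * Vᵀ + scalar (Fin 6) 5 := by
    simp only [A, X₁, transpose_one, mul_one, hg, hg2, hg3, hg4, hx]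
    rw [add_comm, scalar_apply, diagonal_ofNat]
    norm_num
  have hVW : Vᵀ * W = !![6, 5; 1, 5] := by
    ext i j
    fin_cases i <;> fin_cases j <;> simp [W, V, mul_apply, Fin.sum_univ_succ]
    norm_num
  rw [hA, charpoly_add_scalar, charpoly_mul_comm_of_le _ _ (by simp), hVW, charpoly_fin_two,
    trace_fin_two_of, det_fin_two_of]
  norm_num [map_ofNat]
  ring
end

section
/- For the rank-4 fusion ring PSU(2)_7 with formal codegrees being the roots of (x³ - 27x² + 162x - 243)(x - 3), every ratio c_1/c_j of the largest root c_1 of x³ - 27x² + 162x - 243 to any other formal codegree c_j is an algebraic integer. -/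
/-!
Writing `c = 3 u`, the cubic `x³ - 27x² + 162x - 243` becomes `27 q(u)` with the monic integer
cubic `q(u) = u³ - 9u² + 18u - 9`. Hence `c₁ / 3` is an algebraic integer, and for two roots
`c = 3u`, `c' = 3v` of the cubic the quotient `c / c' = u / v` is a root of the monic integer
polynomial whose roots are the nine quotients of roots of `q`.
-/

open Polynomial

noncomputable def codegreeCubic : ℤ[X] := X ^ 3 - 9 * X ^ 2 + 18 * X - 9

/-- `Res_y (q(y), q(x y)) / 9³` for `q = codegreeCubic`, so its roots are the quotients of roots
of `q`. -/
noncomputable def codegreeRatioNonic : ℤ[X] :=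
  X ^ 9 - 18 * X ^ 8 + 117 * X ^ 7 - 372 * X ^ 6 + 648 * X ^ 5 - 648 * X ^ 4 + 372 * X ^ 3
    - 117 * X ^ 2 + 18 * X - 1

theorem codegreeCubic_monic : codegreeCubic.Monic := by
  unfold codegreeCubic
  monicity!

theorem codegreeRatioNonic_monic : codegreeRatioNonic.Monic := by
  unfold codegreeRatioNonic
  monicity!

section Field

variable {K : Type*} [Field K]

theorem aeval_codegreeCubic (x : K) :
    aeval x codegreeCubic = x ^ 3 - 9 * x ^ 2 + 18 * x - 9 := by
  simp [codegreeCubic, map_ofNat]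

theorem aeval_codegreeRatioNonic (x : K) :
    aeval x codegreeRatioNonic = x ^ 9 - 18 * x ^ 8 + 117 * x ^ 7 - 372 * x ^ 6 + 648 * x ^ 5
      - 648 * x ^ 4 + 372 * x ^ 3 - 117 * x ^ 2 + 18 * x - 1 := by
  simp [codegreeRatioNonic, map_ofNat]

theorem isIntegral_of_aeval_codegreeCubic_eq_zero {x : K} (hx : aeval x codegreeCubic = 0) :
    IsIntegral ℤ x :=
  ⟨codegreeCubic, codegreeCubic_monic, hx⟩

variable [CharZero K]

theorem aeval_codegreeCubic_div_three_eq_zero {c : K}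
    (hc : c ^ 3 - 27 * c ^ 2 + 162 * c - 243 = 0) : aeval (c / 3) codegreeCubic = 0 := by
  rw [aeval_codegreeCubic]
  field_simp
  linear_combination hc

theorem aeval_codegreeRatioNonic_div_eq_zero {u v : K} (hu : aeval u codegreeCubic = 0)
    (hv : aeval v codegreeCubic = 0) : aeval (u / v) codegreeRatioNonic = 0 := by
  rw [aeval_codegreeCubic] at hu hv
  have hv₀ : v ≠ 0 := by
    rintro rfl
    norm_num at hv
  have homogenized : u ^ 9 - 18 * u ^ 8 * v + 117 * u ^ 7 * v ^ 2 - 372 * u ^ 6 * v ^ 3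
      + 648 * u ^ 5 * v ^ 4 - 648 * u ^ 4 * v ^ 5 + 372 * u ^ 3 * v ^ 6 - 117 * u ^ 2 * v ^ 7
      + 18 * u * v ^ 8 - v ^ 9 = 0 := by
    grind
  rw [aeval_codegreeRatioNonic]
  field_simp
  linear_combination homogenized

theorem isIntegral_div_of_aeval_codegreeCubic_eq_zero {u v : K}
    (hu : aeval u codegreeCubic = 0) (hv : aeval v codegreeCubic = 0) : IsIntegral ℤ (u / v) :=
  ⟨codegreeRatioNonic, codegreeRatioNonic_monic, aeval_codegreeRatioNonic_div_eq_zero hu hv⟩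

end Field

theorem psu2_7_drinfeld_ratios_general
    (c₁ : ℝ)
    (h₁ : c₁ ^ 3 - 27 * c₁ ^ 2 + 162 * c₁ - 243 = 0) :
    ∀ c : ℝ, (c ^ 3 - 27 * c ^ 2 + 162 * c - 243 = 0 ∨ c = 3) →
      IsIntegral ℤ (c₁ / c) := by
  have hu := aeval_codegreeCubic_div_three_eq_zero h₁
  rintro c (hc | rfl)
  · rw [← div_div_div_cancel_right₀ three_ne_zero c₁ c]
    exact isIntegral_div_of_aeval_codegreeCubic_eq_zero hu
      (aeval_codegreeCubic_div_three_eq_zero hc)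
  · exact isIntegral_of_aeval_codegreeCubic_eq_zero hu

/-- For PSU(2)₇, whose formal codegrees are the roots of
(x³ - 27x² + 162x - 243)(x - 3), every ratio c₁/cⱼ of the largest root c₁ of
the cubic to any other formal codegree cⱼ is an algebraic integer. -/
theorem psu2_7_drinfeld_ratios
    (c₁ : ℝ)
    (h₁ : c₁ ^ 3 - 27 * c₁ ^ 2 + 162 * c₁ - 243 = 0)
    (hmax : ∀ c : ℝ, c ^ 3 - 27 * c ^ 2 + 162 * c - 243 = 0 → c ≤ c₁) :
    ∀ c : ℝ, (c ^ 3 - 27 * c ^ 2 + 162 * c - 243 = 0 ∨ c = 3) →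
      IsIntegral ℤ (c₁ / c) :=
  psu2_7_drinfeld_ratios_general c₁ h₁
end

section
/- For the rank-5 fusion ring SO(3)_2 of FPdim 12 with type [1,1,√3,√3,2], the formal codegrees are 12 (multiplicity 2), 4 (multiplicity 2) and 3, and all ratios 12/12, 12/4 = 3, 12/3 = 4 are (rational, hence algebraic) integers. -/
/-!
Listing the basis in the order `0, 1, 4, 2, 3` makes `A = Σ Xᵢ Xᵢᵀ` block diagonal, with
blocks `!![5,1,3; 1,5,3; 3,3,9]` and `!![8,4; 4,8]`. The first has eigenvalues `4` (on
`(1,-1,0)`) and `12, 3` (on the invariant plane `{(a,a,b)}`), the second has `12` and `4`;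
the characteristic polynomial of `A` is the product of those of the blocks.
-/

open Polynomial Matrix

theorem isIntegral_ofNat {R B : Type*} [CommRing R] [Ring B] [Algebra R B] (n : ℕ)
    [n.AtLeastTwo] : IsIntegral R (no_index (OfNat.ofNat n : B)) :=
  Nat.cast_ofNat (R := B) (n := n) ▸ isIntegral_natCast n

theorem Matrix.charpoly_eq_mul_of_submatrix_eq_fromBlocks {R l m n : Type*} [CommRing R]
    [Fintype l] [Fintype m] [Fintype n] [DecidableEq l] [DecidableEq m] [DecidableEq n]
    (e : m ⊕ n ≃ l) {A : Matrix l l R} {B : Matrix m m R} {C : Matrix n n R}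
    (h : A.submatrix e e = fromBlocks B 0 0 C) : A.charpoly = B.charpoly * C.charpoly := by
  rw [← charpoly_reindex e.symm, reindex_apply, Equiv.symm_symm, h, charpoly_fromBlocks_zero₁₂]

def so3Level2BlockEquiv : Fin 3 ⊕ Fin 2 ≃ Fin 5 where
  toFun := Sum.elim ![0, 1, 4] ![2, 3]
  invFun := ![.inl 0, .inl 1, .inr 0, .inr 1, .inl 2]
  left_inv := by decide
  right_inv := by decide

theorem so3Level2_submatrix_blockEquiv :
    (!![5,1,0,0,3; 1,5,0,0,3; 0,0,8,4,0; 0,0,4,8,0; 3,3,0,0,9] : Matrix (Fin 5) (Fin 5) ℝ).submatrix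
        so3Level2BlockEquiv so3Level2BlockEquiv =
      fromBlocks !![5,1,3; 1,5,3; 3,3,9] 0 0 !![8,4; 4,8] := by
  ext (i | i) (j | j) <;> fin_cases i <;> fin_cases j <;> rfl

theorem charpoly_so3Level2_block₁ :
    (!![5,1,3; 1,5,3; 3,3,9] : Matrix (Fin 3) (Fin 3) ℝ).charpoly = (X - 12) * (X - 4) * (X - 3) := by
  rw [charpoly, det_fin_three]
  simp only [charmatrix_apply_eq, charmatrix_apply_ne, ne_eq, Fin.reduceEq, not_false_eq_true,
    of_apply, cons_val', cons_val_zero, cons_val_one, cons_val, cons_val_fin_one, map_ofNat, map_one,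
    mul_neg, neg_mul, neg_neg, mul_one, one_mul]
  ring

theorem charpoly_so3Level2_block₂ :
    (!![8,4; 4,8] : Matrix (Fin 2) (Fin 2) ℝ).charpoly = (X - 12) * (X - 4) := by
  rw [charpoly_fin_two]
  norm_num [trace_fin_two, det_fin_two, map_ofNat]
  ring

/-- For the rank-5 fusion ring SO(3)₂ (FPdim 12, type [1,1,√3,√3,2]), the formal
codegrees are 12 (multiplicity 2), 4 (multiplicity 2) and 3 — i.e. the
characteristic polynomial of A = Σᵢ Xᵢ Xᵢᵀ is (x-12)²(x-4)²(x-3) — and the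
ratios 12/12, 12/4 = 3, 12/3 = 4 are algebraic integers. -/
theorem so3_level2_codegrees :
    let X₁ : Matrix (Fin 5) (Fin 5) ℝ := 1
    let X₂ : Matrix (Fin 5) (Fin 5) ℝ :=
      !![0,1,0,0,0; 1,0,0,0,0; 0,0,0,1,0; 0,0,1,0,0; 0,0,0,0,1]
    let X₃ : Matrix (Fin 5) (Fin 5) ℝ :=
      !![0,0,1,0,0; 0,0,0,1,0; 1,0,0,0,1; 0,1,0,0,1; 0,0,1,1,0]
    let X₄ : Matrix (Fin 5) (Fin 5) ℝ :=
      !![0,0,0,1,0; 0,0,1,0,0; 0,1,0,0,1; 1,0,0,0,1; 0,0,1,1,0]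
    let X₅ : Matrix (Fin 5) (Fin 5) ℝ :=
      !![0,0,0,0,1; 0,0,0,0,1; 0,0,1,1,0; 0,0,1,1,0; 1,1,0,0,1]
    let A := X₁ * X₁ᵀ + X₂ * X₂ᵀ + X₃ * X₃ᵀ + X₄ * X₄ᵀ + X₅ * X₅ᵀ
    A.charpoly = (X - 12) ^ 2 * (X - 4) ^ 2 * (X - 3) ∧
      (12 : ℝ) / 4 = 3 ∧ (12 : ℝ) / 3 = 4 ∧
      IsIntegral ℤ ((12 : ℝ) / 12) ∧ IsIntegral ℤ ((12 : ℝ) / 4) ∧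
      IsIntegral ℤ ((12 : ℝ) / 3) := by
  intro X₁ X₂ X₃ X₄ X₅ A
  have hA : A = !![5,1,0,0,3; 1,5,0,0,3; 0,0,8,4,0; 0,0,4,8,0; 3,3,0,0,9] := by
    ext i j
    fin_cases i <;> fin_cases j <;>
      simp [A, X₁, X₂, X₃, X₄, X₅, vecMul, dotProduct, Fin.sum_univ_five] <;> norm_num
  refine ⟨?_, by norm_num, by norm_num, ?_, ?_, ?_⟩
  · rw [hA, charpoly_eq_mul_of_submatrix_eq_fromBlocks _ so3Level2_submatrix_blockEquiv,
      charpoly_so3Level2_block₁, charpoly_so3Level2_block₂]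
    ring
  all_goals norm_num [isIntegral_ofNat, isIntegral_one]
end

section
/- The characteristic polynomial x⁶ - 91x⁵ + 2366x⁴ - 26364x³ + 142805x² - 371293x + 371293 of the formal codegree matrix of PSU(2)_11 has constant term 371293 = 13⁵ and second coefficient 91 = 7·13, and all its roots are real, positive, and lie in the real cyclotomic field ℚ(ζ_13)⁺ (an abelian extension of ℚ of degree 6). -/
open Polynomial Complex IntermediateField

/-!
Substituting `y = 2 - 13 / z` turns the polynomial, up to the factor `z⁶ / 13`, into the minimal
polynomial of `2 cos (2π/13)`, and writing `y = ζ + ζ⁻¹` turns that, up to the factor `ζ⁶`, into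
the 13-th cyclotomic polynomial. So the roots are the numbers `13 / (2 - ζ - ζ⁻¹) = 13 / |1 - ζ|²`
with `ζ` a primitive 13-th root of unity: positive reals lying in `ℚ(ζ)`.
-/

/-- The minimal polynomial of `2 cos (2π / 13)`. -/
def twoCosMinpoly {R : Type*} [CommRing R] (y : R) : R :=
  y ^ 6 + y ^ 5 - 5 * y ^ 4 - 4 * y ^ 3 + 6 * y ^ 2 + 3 * y - 1

lemma geom_sum_thirteen_eq_pow_mul_twoCosMinpoly {K : Type*} [Field K] {ζ : K} (hζ : ζ ≠ 0) :
    ∑ i ∈ Finset.range 13, ζ ^ i = ζ ^ 6 * twoCosMinpoly (ζ + ζ⁻¹) := by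
  simp only [twoCosMinpoly, Finset.sum_range_succ, Finset.sum_range_zero]
  field_simp
  ring

lemma thirteen_mul_codegree_poly_eq {K : Type*} [Field K] {z : K} (hz : z ≠ 0) :
    13 * (z ^ 6 - 91 * z ^ 5 + 2366 * z ^ 4 - 26364 * z ^ 3 + 142805 * z ^ 2 - 371293 * z
      + 371293) = z ^ 6 * twoCosMinpoly (2 - 13 / z) := by
  simp only [twoCosMinpoly]
  field_simp
  ring

lemma exists_ne_zero_add_inv_eq {K : Type*} [Field K] [IsAlgClosed K] [NeZero (2 : K)] (y : K) :
    ∃ ζ : K, ζ ≠ 0 ∧ ζ + ζ⁻¹ = y := by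
  obtain ⟨ζ, hζ⟩ := exists_quadratic_eq_zero one_ne_zero (IsAlgClosed.exists_eq_mul_self _)
    (b := -y) (c := 1)
  have hζ0 : ζ ≠ 0 := by rintro rfl; simp at hζ
  refine ⟨ζ, hζ0, ?_⟩
  field_simp
  linear_combination hζ

lemma exists_isPrimitiveRoot_of_codegree_poly_eq_zero {z : ℂ}
    (hz : z ^ 6 - 91 * z ^ 5 + 2366 * z ^ 4 - 26364 * z ^ 3 + 142805 * z ^ 2 - 371293 * z
      + 371293 = 0) :
    ∃ ζ : ℂ, IsPrimitiveRoot ζ 13 ∧ z = 13 / (2 - ζ - ζ⁻¹) := by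
  have hz0 : z ≠ 0 := by rintro rfl; norm_num at hz
  obtain ⟨ζ, hζ0, hζy⟩ := exists_ne_zero_add_inv_eq (2 - 13 / z)
  have hroot : IsRoot (cyclotomic 13 ℂ) ζ := by
    have hy : twoCosMinpoly (2 - 13 / z) = 0 := by
      simpa [hz, hz0] using (thirteen_mul_codegree_poly_eq hz0).symm
    have : Fact (Nat.Prime 13) := ⟨by norm_num⟩
    rw [cyclotomic_prime, IsRoot, eval_geom_sum, geom_sum_thirteen_eq_pow_mul_twoCosMinpoly hζ0,
      hζy, hy, mul_zero]
  refine ⟨ζ, isRoot_cyclotomic_iff.mp hroot, ?_⟩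
  rw [sub_sub, hζy, sub_sub_cancel, div_div_cancel₀ (by norm_num)]

lemma two_sub_sub_inv_eq_normSq {ζ : ℂ} (hζ : ‖ζ‖ = 1) : 2 - ζ - ζ⁻¹ = normSq (1 - ζ) := by
  have h : ζ * (starRingEnd ℂ) ζ = 1 := by rw [mul_conj', hζ]; norm_num
  rw [inv_eq_conj hζ, ← mul_conj, map_sub, map_one]
  linear_combination -h

lemma exists_eq_sum_smul_pow_of_mem_adjoin {K L : Type*} [Field K] [Field L] [Algebra K L]
    {ω : L} {n : ℕ} (hn : n ≠ 0) (hω : ω ^ n = 1) {x : L} (hx : x ∈ K⟮ω⟯) :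
    ∃ c : Fin n → K, x = ∑ k : Fin n, c k • ω ^ (k : ℕ) := by
  have hmonic : (X ^ n - 1 : K[X]).Monic := monic_X_pow_sub_C 1 hn
  have hω' : aeval ω (X ^ n - 1 : K[X]) = 0 := by simp [hω]
  rw [← mem_toSubalgebra, adjoin_simple_toSubalgebra_of_isAlgebraic ⟨_, hmonic.ne_zero, hω'⟩,
    Algebra.adjoin_singleton_eq_range_aeval] at hx
  obtain ⟨p, rfl⟩ := hx
  have hdeg : (X ^ n - 1 : K[X]).natDegree = n := natDegree_X_pow_sub_C
  have hdeg_mod : (p %ₘ (X ^ n - 1)).natDegree < n :=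
    (natDegree_modByMonic_lt p hmonic fun h => hn (by rw [← hdeg, h, natDegree_one])).trans_eq hdeg
  refine ⟨fun k => (p %ₘ (X ^ n - 1)).coeff k, ?_⟩
  conv_lhs => rw [← modByMonic_add_div p (X ^ n - 1)]
  simp only [AlgHom.toRingHom_eq_coe, RingHom.coe_coe, map_add, map_mul, hω', zero_mul, add_zero,
    aeval_eq_sum_range' hdeg_mod, Finset.sum_range]

/-- The characteristic polynomial x⁶ - 91x⁵ + 2366x⁴ - 26364x³ + 142805x²
- 371293x + 371293 of the formal codegree matrix of PSU(2)₁₁ has constant term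
371293 = 13⁵ and subleading coefficient -91 with 91 = 7·13, and all of its
roots are real, positive, and lie in the real cyclotomic field
ℚ(ζ₁₃)⁺ = ℚ(ζ₁₃) ∩ ℝ (each root is a ℚ-linear combination of 13-th roots of
unity and is real). -/
theorem psu2_11_codegree_poly :
    (371293 : ℕ) = 13 ^ 5 ∧ (91 : ℕ) = 7 * 13 ∧
    ∀ z : ℂ, z ^ 6 - 91 * z ^ 5 + 2366 * z ^ 4 - 26364 * z ^ 3
        + 142805 * z ^ 2 - 371293 * z + 371293 = 0 →
      z.im = 0 ∧ 0 < z.re ∧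
      ∃ c : Fin 13 → ℚ,
        z = ∑ k : Fin 13, (c k : ℂ)
          * Complex.exp (2 * Real.pi * Complex.I * (k : ℕ) / 13) := by
  refine ⟨by norm_num, by norm_num, fun z hz => ?_⟩
  obtain ⟨ζ, hζ, rfl⟩ := exists_isPrimitiveRoot_of_codegree_poly_eq_zero hz
  have hreal : (13 : ℂ) / (2 - ζ - ζ⁻¹) = ((13 / normSq (1 - ζ) : ℝ) : ℂ) := by
    rw [two_sub_sub_inv_eq_normSq (hζ.norm'_eq_one (by norm_num))]
    norm_cast
  have hpos : 0 < 13 / normSq (1 - ζ) :=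
    div_pos (by norm_num) (normSq_pos.mpr (sub_ne_zero.mpr (hζ.ne_one (by norm_num)).symm))
  set ω := Complex.exp (2 * Real.pi * Complex.I / 13)
  have hω : IsPrimitiveRoot ω 13 := by simpa using isPrimitiveRoot_exp 13 (by norm_num)
  obtain ⟨i, -, rfl⟩ := hω.eq_pow_of_pow_eq_one hζ.pow_eq_one
  have hmem : (13 : ℂ) / (2 - ω ^ i - (ω ^ i)⁻¹) ∈ ℚ⟮ω⟯ := by
    have hωi : ω ^ i ∈ ℚ⟮ω⟯ := pow_mem (mem_adjoin_simple_self ℚ ω) i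
    exact div_mem (by simp) (sub_mem (sub_mem (by simp) hωi) (inv_mem hωi))
  obtain ⟨c, hc⟩ := exists_eq_sum_smul_pow_of_mem_adjoin (by norm_num) hω.pow_eq_one hmem
  refine ⟨by rw [hreal, ofReal_im], by rwa [hreal, ofReal_re], c, hc.trans ?_⟩
  refine Finset.sum_congr rfl fun k _ => ?_
  rw [Rat.smul_def, ← Complex.exp_nat_mul]
  ring_nf
end
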